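/- arXiv:1607.05815 — 2 statements merged into one kernel-verified Lean document; each statement's English description precedes it below -/
import Mathlib

section
/- Let H1 and H2 be complex Hilbert spaces and let A ∈ B(H1), B ∈ B(H2, H1), C ∈ B(H1, H2), D ∈ B(H2) be such that the block operator [[A, B], [C, D]] : H1 ⊕ H2 → H1 ⊕ H2 is unitary. Then for every z ∈ ℂ with |z| < 1 the operator I − z D is invertible, and the transfer function τ(z) = A + z B (I − z D)^{-1} C satisfies I − τ(z)* τ(z) = (1 − |z|²) C* (I − z̄ D*)^{-1} (I − z D)^{-1} C. -/
/-!
Put `u = (I - z D)⁻¹ C`, so that `u = C + z D u` and `τ(z) = A + z B u`. Then the block operator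
maps `(x, z u x)` to `(τ(z) x, u x)`, and since it is an isometry,
`‖x‖² + |z|² ‖u x‖² = ‖τ(z) x‖² + ‖u x‖²`; the operator form of this identity is the claim, as
`u* u = C* (I - z̄ D*)⁻¹ (I - z D)⁻¹ C`. The inverse exists because `‖D‖ ≤ 1`.
-/

open ContinuousLinearMap

theorem isUnit_one_sub_smul_of_norm_lt_one {𝕜 R : Type*} [NormedField 𝕜] [NormedRing R]
    [NormedAlgebra 𝕜 R] [CompleteSpace R] {z : 𝕜} {T : R} (hz : ‖z‖ < 1) (hT : ‖T‖ ≤ 1) :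
    IsUnit (1 - z • T) := by
  refine isUnit_one_sub_of_norm_lt_one ((norm_smul_le z T).trans_lt ?_)
  nlinarith [norm_nonneg z, norm_nonneg T]

theorem Ring.inverse_one_sub_smul_eq {𝕜 R : Type*} [CommRing 𝕜] [Ring R] [Algebra 𝕜 R] {z : 𝕜}
    {T : R} (h : IsUnit (1 - z • T)) :
    Ring.inverse (1 - z • T) = 1 + z • (T * Ring.inverse (1 - z • T)) := by
  have hinv := Ring.mul_inverse_cancel _ h
  rw [sub_mul, one_mul, smul_mul_assoc] at hinv
  exact sub_eq_iff_eq_add.mp hinv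

namespace ContinuousLinearMap

variable {𝕜 E F G : Type*} [RCLike 𝕜]
  [NormedAddCommGroup E] [InnerProductSpace 𝕜 E] [CompleteSpace E]
  [NormedAddCommGroup F] [InnerProductSpace 𝕜 F] [CompleteSpace F]
  [NormedAddCommGroup G] [InnerProductSpace 𝕜 G] [CompleteSpace G]

theorem norm_le_one_of_adjoint_comp_self_add_eq_one {B : E →L[𝕜] F} {D : E →L[𝕜] G}
    (h : adjoint B ∘L B + adjoint D ∘L D = 1) : ‖D‖ ≤ 1 := by
  refine opNorm_le_bound D zero_le_one fun y => ?_
  have hy := congrArg (fun T : E →L[𝕜] E => RCLike.re (inner 𝕜 (T y) y)) h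
  simp only [add_apply, comp_apply, inner_add_left, adjoint_inner_left, one_apply_eq_self,
    map_add, inner_self_eq_norm_sq] at hy
  nlinarith [norm_nonneg (D y), norm_nonneg y, sq_nonneg ‖B y‖]

theorem adjoint_ringInverse (T : E →L[𝕜] E) :
    adjoint (Ring.inverse T) = Ring.inverse (adjoint T) := by
  simp only [← star_eq_adjoint, Ring.inverse_star]

theorem adjoint_one_sub_smul (z : 𝕜) (T : E →L[𝕜] E) :
    adjoint (1 - z • T) = 1 - starRingEnd 𝕜 z • adjoint T := by
  simp [← star_eq_adjoint, star_smul]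

theorem one_sub_adjoint_comp_self_of_eq_add_smul_comp
    {A : E →L[𝕜] E} {B : F →L[𝕜] E} {C : E →L[𝕜] F} {D : F →L[𝕜] F}
    (hc₁ : adjoint A ∘L A + adjoint C ∘L C = 1)
    (hc₂ : adjoint B ∘L B + adjoint D ∘L D = 1)
    (hc₃ : adjoint A ∘L B + adjoint C ∘L D = 0)
    {z : 𝕜} {u : E →L[𝕜] F} (hu : u = C + z • D ∘L u) :
    1 - adjoint (A + z • B ∘L u) ∘L (A + z • B ∘L u) =
      ((1 - ‖z‖ ^ 2 : ℝ) : 𝕜) • (adjoint u ∘L u) := by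
  have hscal : ((1 - ‖z‖ ^ 2 : ℝ) : 𝕜) = 1 - z * starRingEnd 𝕜 z := by
    rw [RCLike.mul_conj]; push_cast; ring
  have hu' := congrArg (fun v => adjoint v ∘L v) hu
  have h₂ := congrArg (fun T => adjoint u ∘L T ∘L u) hc₂
  have h₃ := congrArg (fun T => T ∘L u) hc₃
  have h₃' := congrArg (fun T => adjoint u ∘L adjoint T) hc₃
  rw [hscal]
  simp only [map_add, map_smulₛₗ, map_zero, adjoint_comp, adjoint_adjoint, add_comp, comp_add,
    smul_comp, comp_smul, zero_comp, comp_zero, one_def, id_comp, comp_assoc] at hu' h₂ h₃ h₃' ⊢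
  linear_combination (norm := module) -hc₁ - z • h₃ - starRingEnd 𝕜 z • h₃'
    - (z * starRingEnd 𝕜 z) • h₂ - hu'

end ContinuousLinearMap

theorem transfer_function_identity_general
    {H₁ H₂ : Type*} [NormedAddCommGroup H₁] [InnerProductSpace ℂ H₁] [CompleteSpace H₁]
    [NormedAddCommGroup H₂] [InnerProductSpace ℂ H₂] [CompleteSpace H₂]
    (A : H₁ →L[ℂ] H₁) (B : H₂ →L[ℂ] H₁) (C : H₁ →L[ℂ] H₂) (D : H₂ →L[ℂ] H₂)
    (hc₁ : adjoint A ∘L A + adjoint C ∘L C = 1)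
    (hc₂ : adjoint B ∘L B + adjoint D ∘L D = 1)
    (hc₃ : adjoint A ∘L B + adjoint C ∘L D = 0)
    (z : ℂ) (hz : ‖z‖ < 1) :
    IsUnit (1 - z • D) ∧
    IsUnit (1 - (starRingEnd ℂ z) • adjoint D) ∧
    1 - adjoint (A + z • (B ∘L (Ring.inverse (1 - z • D) ∘L C))) ∘L
          (A + z • (B ∘L (Ring.inverse (1 - z • D) ∘L C))) =
      ((1 - ‖z‖ ^ 2 : ℝ) : ℂ) •
        (adjoint C ∘L (Ring.inverse (1 - (starRingEnd ℂ z) • adjoint D) ∘L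
          (Ring.inverse (1 - z • D) ∘L C))) := by
  have hE : IsUnit (1 - z • D) :=
    isUnit_one_sub_smul_of_norm_lt_one hz (norm_le_one_of_adjoint_comp_self_add_eq_one hc₂)
  have hu : Ring.inverse (1 - z • D) ∘L C = C + z • D ∘L (Ring.inverse (1 - z • D) ∘L C) := by
    conv_lhs => rw [Ring.inverse_one_sub_smul_eq hE]
    rw [add_comp, smul_comp, mul_def, comp_assoc, one_def, id_comp]
  rw [← adjoint_one_sub_smul, ← adjoint_ringInverse,
    one_sub_adjoint_comp_self_of_eq_add_smul_comp hc₁ hc₂ hc₃ hu, adjoint_comp, comp_assoc]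
  exact ⟨hE, star_eq_adjoint (1 - z • D) ▸ hE.star, rfl⟩

/-- If the block operator `[[A, B], [C, D]] : H₁ ⊕ H₂ → H₁ ⊕ H₂` is unitary (expressed by the
six algebraic relations below), then for `|z| < 1` the operator `I - z D` is invertible and the
transfer function `τ(z) = A + z B (I − z D)⁻¹ C` satisfies
`I − τ(z)* τ(z) = (1 − |z|²) C* (I − z̄ D*)⁻¹ (I − z D)⁻¹ C`. -/
theorem transfer_function_identity
    {H₁ H₂ : Type*} [NormedAddCommGroup H₁] [InnerProductSpace ℂ H₁] [CompleteSpace H₁]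
    [NormedAddCommGroup H₂] [InnerProductSpace ℂ H₂] [CompleteSpace H₂]
    (A : H₁ →L[ℂ] H₁) (B : H₂ →L[ℂ] H₁) (C : H₁ →L[ℂ] H₂) (D : H₂ →L[ℂ] H₂)
    (hc₁ : adjoint A ∘L A + adjoint C ∘L C = 1)
    (hc₂ : adjoint B ∘L B + adjoint D ∘L D = 1)
    (hc₃ : adjoint A ∘L B + adjoint C ∘L D = 0)
    (hr₁ : A ∘L adjoint A + B ∘L adjoint B = 1)
    (hr₂ : C ∘L adjoint C + D ∘L adjoint D = 1)
    (hr₃ : A ∘L adjoint C + B ∘L adjoint D = 0)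
    (z : ℂ) (hz : ‖z‖ < 1) :
    IsUnit (1 - z • D) ∧
    IsUnit (1 - (starRingEnd ℂ z) • adjoint D) ∧
    1 - adjoint (A + z • (B ∘L (Ring.inverse (1 - z • D) ∘L C))) ∘L
          (A + z • (B ∘L (Ring.inverse (1 - z • D) ∘L C))) =
      ((1 - ‖z‖ ^ 2 : ℝ) : ℂ) •
        (adjoint C ∘L (Ring.inverse (1 - (starRingEnd ℂ z) • adjoint D) ∘L
          (Ring.inverse (1 - z • D) ∘L C))) :=
  transfer_function_identity_general A B C D hc₁ hc₂ hc₃ z hz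
end

section
/- Let T be a pure contraction on a complex Hilbert space H, let G be the closure of the range of D_T, and let Π : H → ℓ²(ℕ, G) be the isometry (Π h)(n) = D_T T*ⁿ h. Then the linear span of {Sᵐ (Π h) : m ∈ ℕ, h ∈ H} is dense in ℓ²(ℕ, G), where S is the unilateral shift on ℓ²(ℕ, G). (Minimality of the Sz.-Nagy–Foias isometric dilation.) -/
open ContinuousLinearMap
open scoped ENNReal

set_option linter.unusedSectionVars false

noncomputable section

section ShiftOperator

variable {E : Type*} [NormedAddCommGroup E] [InnerProductSpace ℂ E]

/-- The right-shifted sequence: `(shiftFun f) 0 = 0`, `(shiftFun f) (n+1) = f n`. -/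
def shiftFun (f : ℕ → E) : ℕ → E
  | 0 => 0
  | (n + 1) => f n

lemma summable_of_lp (f : lp (fun _ : ℕ => E) 2) :
    Summable fun n => ‖(f : ∀ _ : ℕ, E) n‖ ^ (2 : ℝ) := by
  have h := lp.memℓp f
  have h2 : (0 : ℝ) < (2 : ℝ≥0∞).toReal := by norm_num
  simpa using (memℓp_gen_iff h2).mp h

lemma summable_shiftFun (f : lp (fun _ : ℕ => E) 2) :
    Summable fun n => ‖shiftFun (f : ∀ _ : ℕ, E) n‖ ^ (2 : ℝ) := by
  have h1 : Summable fun n => ‖shiftFun (f : ∀ _ : ℕ, E) (n + 1)‖ ^ (2 : ℝ) := by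
    simpa [shiftFun] using summable_of_lp f
  exact (summable_nat_add_iff
    (f := fun n => ‖shiftFun ((f : ∀ _ : ℕ, E)) n‖ ^ (2 : ℝ)) 1).mp h1

lemma memℓp_shiftFun (f : lp (fun _ : ℕ => E) 2) : Memℓp (shiftFun (f : ∀ _ : ℕ, E)) 2 := by
  apply memℓp_gen
  simpa using summable_shiftFun f

lemma norm_shift_eq (f : lp (fun _ : ℕ => E) 2)
    (g : lp (fun _ : ℕ => E) 2) (hg : (g : ∀ _ : ℕ, E) = shiftFun (f : ∀ _ : ℕ, E)) :
    ‖g‖ = ‖f‖ := by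
  have h2 : (0 : ℝ) < (2 : ℝ≥0∞).toReal := by norm_num
  rw [lp.norm_eq_tsum_rpow h2 f, lp.norm_eq_tsum_rpow h2 g]
  congr 1
  have htsum : (∑' n, ‖shiftFun (f : ∀ _ : ℕ, E) n‖ ^ (2 : ℝ)) =
      ∑' n, ‖(f : ∀ _ : ℕ, E) n‖ ^ (2 : ℝ) := by
    rw [(summable_shiftFun f).tsum_eq_zero_add]
    simp [shiftFun]
  simp only [hg]
  simpa using htsum

/-- The unilateral shift `S` on `ℓ²(ℕ, E)`: `(S f)(0) = 0` and `(S f)(n) = f (n-1)` for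
`n ≥ 1`. -/
def shiftOp (E : Type*) [NormedAddCommGroup E] [InnerProductSpace ℂ E] :
    lp (fun _ : ℕ => E) 2 →L[ℂ] lp (fun _ : ℕ => E) 2 :=
  LinearMap.mkContinuous
    { toFun := fun f => ⟨shiftFun (f : ∀ _ : ℕ, E), memℓp_shiftFun f⟩
      map_add' := by
        intro f g
        apply lp.ext
        funext n
        cases n <;> simp [shiftFun, lp.coeFn_add, Pi.add_apply] <;> first | rfl | exact (add_zero (0 : E)).symm
      map_smul' := by
        intro c f
        apply lp.ext
        funext n
        cases n <;> simp [shiftFun, lp.coeFn_smul, Pi.smul_apply] }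
    1
    (by
      intro f
      rw [one_mul]
      exact le_of_eq (norm_shift_eq f _ rfl))

@[simp] lemma shiftOp_apply_zero (f : lp (fun _ : ℕ => E) 2) :
    (shiftOp E f : ∀ _ : ℕ, E) 0 = 0 := rfl

@[simp] lemma shiftOp_apply_succ (f : lp (fun _ : ℕ => E) 2) (n : ℕ) :
    (shiftOp E f : ∀ _ : ℕ, E) (n + 1) = (f : ∀ _ : ℕ, E) n := rfl

end ShiftOperator

section Defect

variable {H : Type*} [NormedAddCommGroup H] [InnerProductSpace ℂ H] [CompleteSpace H]

/-- The defect operator `D_T = (I - T T*)^{1/2}` of a contraction `T`. -/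
def defect (T : H →L[ℂ] H) : H →L[ℂ] H :=
  CFC.sqrt (1 - T * adjoint T)

end Defect

section DefectClosure

variable {H : Type*} [NormedAddCommGroup H] [InnerProductSpace ℂ H] [CompleteSpace H]

/-- The closure of the range of the defect operator of `T`. -/
def defectClos (T : H →L[ℂ] H) : Submodule ℂ H :=
  (LinearMap.range (defect T : H →ₗ[ℂ] H)).topologicalClosure

/-- `D_T x`, viewed as an element of the closure of the range of `D_T`. -/
def defectElem (T : H →L[ℂ] H) (x : H) : defectClos T :=
  ⟨defect T x, Submodule.le_topologicalClosure _ (LinearMap.mem_range_self _ x)⟩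

instance (T : H →L[ℂ] H) : CompleteSpace (defectClos T) :=
  (Submodule.isClosed_topologicalClosure _).isComplete.completeSpace_coe

end DefectClosure

/-! Since `(Π h)(n + 1) = (Π (T* h))(n)`, the sequence `Π h - S Π (T* h)` is `D_T h` placed
at index `0`; applying `Sⁿ` puts `D_T h` at index `n`. So the span contains `eₙ ⊗ D_T h` for
all `n` and `h`, and these are total in `ℓ²(ℕ, G)` because the vectors `D_T h` are dense in `G`. -/

section Density

variable {α : Type*} {E : α → Type*} [DecidableEq α] [∀ i, NormedAddCommGroup (E i)]
  {p : ℝ≥0∞} [Fact (1 ≤ p)]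

theorem lp.dense_of_single_mem (hp : p ≠ ⊤) (V : AddSubgroup (lp E p)) {s : ∀ i, Set (E i)}
    (hs : ∀ i, Dense (s i)) (hV : ∀ i, ∀ a ∈ s i, lp.single p i a ∈ V) :
    Dense (V : Set (lp E p)) := by
  have hsingle : ∀ i a, lp.single p i a ∈ V.topologicalClosure := fun i a =>
    Set.MapsTo.closure (hV i) (lp.isometry_single i).continuous (hs i a)
  intro f
  exact V.isClosed_topologicalClosure.mem_of_tendsto (lp.hasSum_single hp f)
    (Filter.Eventually.of_forall fun t => sum_mem fun i _ => hsingle i (f i))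

end Density

section Shift

variable {E : Type*} [NormedAddCommGroup E] [InnerProductSpace ℂ E]

theorem shiftOp_single (n : ℕ) (a : E) :
    shiftOp E (lp.single 2 n a) = lp.single 2 (n + 1) a := by
  ext k
  cases k <;> simp [lp.single_apply, Pi.single_apply]

theorem shiftOp_pow_single (m n : ℕ) (a : E) :
    (shiftOp E ^ m) (lp.single 2 n a) = lp.single 2 (n + m) a := by
  induction m with
  | zero => rfl
  | succ m ih => rw [pow_succ', mul_apply_eq_comp, ih, shiftOp_single, add_assoc]

theorem sub_shiftOp_eq_single_zero {f g : lp (fun _ : ℕ => E) 2} (h : ∀ n, f (n + 1) = g n) :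
    f - shiftOp E g = lp.single 2 0 (f 0) := by
  ext k
  cases k <;> simp [lp.single_apply, h]

theorem single_eq_shiftOp_pow_sub {f g : lp (fun _ : ℕ => E) 2} (h : ∀ n, f (n + 1) = g n)
    (n : ℕ) : lp.single 2 n (f 0) = (shiftOp E ^ n) f - (shiftOp E ^ (n + 1)) g := by
  rw [pow_succ, mul_apply_eq_comp, ← map_sub, sub_shiftOp_eq_single_zero h, shiftOp_pow_single,
    zero_add]

end Shift

theorem denseRange_defectElem {H : Type*} [NormedAddCommGroup H] [InnerProductSpace ℂ H]
    [CompleteSpace H] (T : H →L[ℂ] H) : DenseRange (defectElem T) := by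
  exact Subtype.dense_iff.2 fun _ hy => by rwa [← Set.range_comp]

theorem minimality_of_dilation_general
    {H : Type*} [NormedAddCommGroup H] [InnerProductSpace ℂ H] [CompleteSpace H]
    (T : H →L[ℂ] H)
    (Γ : H → lp (fun _ : ℕ => ↥(defectClos T)) 2)
    (hΓ : ∀ (h : H) (n : ℕ),
      (((Γ h : ∀ _ : ℕ, ↥(defectClos T)) n : ↥(defectClos T)) : H) =
        defect T (((adjoint T) ^ n) h)) :
    Dense ((Submodule.span ℂ {f : lp (fun _ : ℕ => ↥(defectClos T)) 2 |
        ∃ (m : ℕ) (h : H), f = ((shiftOp ↥(defectClos T)) ^ m) (Γ h)} :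
      Submodule ℂ (lp (fun _ : ℕ => ↥(defectClos T)) 2)) :
      Set (lp (fun _ : ℕ => ↥(defectClos T)) 2)) := by
  refine lp.dense_of_single_mem (p := 2) ENNReal.ofNat_ne_top (Submodule.span ℂ _).toAddSubgroup
    (fun _ => denseRange_defectElem T) ?_
  rintro n _ ⟨x, rfl⟩
  have hΓ_zero : Γ x 0 = defectElem T x := Subtype.ext <| by simp [hΓ, defectElem]
  have hΓ_succ : ∀ k, Γ x (k + 1) = Γ (adjoint T x) k := fun k =>
    Subtype.ext <| by rw [hΓ, hΓ, pow_succ, mul_apply_eq_comp]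
  rw [← hΓ_zero, single_eq_shiftOp_pow_sub hΓ_succ]
  exact sub_mem (Submodule.subset_span ⟨n, x, rfl⟩) (Submodule.subset_span ⟨n + 1, _, rfl⟩)

/-- Minimality of the Sz.-Nagy–Foias isometric dilation: for a pure contraction `T` with
`G` the closure of the range of `D_T` and `Γ : H → ℓ²(ℕ, G)` the canonical isometry
`(Γ h)(n) = D_T T*ⁿ h`, the linear span of `{Sᵐ (Γ h) : m ∈ ℕ, h ∈ H}` is dense in
`ℓ²(ℕ, G)`. -/
theorem minimality_of_dilation
    {H : Type*} [NormedAddCommGroup H] [InnerProductSpace ℂ H] [CompleteSpace H]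
    (T : H →L[ℂ] H) (hT : ‖T‖ ≤ 1)
    (hpure : ∀ h : H,
      Filter.Tendsto (fun n : ℕ => ((adjoint T) ^ n) h) Filter.atTop (nhds 0))
    (Γ : H → lp (fun _ : ℕ => ↥(defectClos T)) 2)
    (hΓ : ∀ (h : H) (n : ℕ),
      (((Γ h : ∀ _ : ℕ, ↥(defectClos T)) n : ↥(defectClos T)) : H) =
        defect T (((adjoint T) ^ n) h)) :
    Dense ((Submodule.span ℂ {f : lp (fun _ : ℕ => ↥(defectClos T)) 2 |
        ∃ (m : ℕ) (h : H), f = ((shiftOp ↥(defectClos T)) ^ m) (Γ h)} :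
      Submodule ℂ (lp (fun _ : ℕ => ↥(defectClos T)) 2)) :
      Set (lp (fun _ : ℕ => ↥(defectClos T)) 2)) :=
  minimality_of_dilation_general T Γ hΓ
end
end
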